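/- (Von Neumann's trace inequality, real square case) For any A, B ∈ ℝ^{d×d} with singular values σ_{A,1} ≥ … ≥ σ_{A,d} and σ_{B,1} ≥ … ≥ σ_{B,d} listed in nonincreasing order, tr(A B) ≤ Σ_{i=1}^{d} σ_{A,i} σ_{B,i}. -/

import Mathlib

open scoped BigOperators
open Matrix

/-- The singular values of a real matrix `M`: the nonnegative square roots of the
eigenvalues of `MᵀM` (there are `n` of them for an `m × n` matrix, indexed by `n`). -/
noncomputable def singularValues {m n : Type*} [Fintype m] [Fintype n] [DecidableEq n]
    (M : Matrix m n ℝ) : n → ℝ :=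
  fun i => Real.sqrt ((show (Mᵀ * M).IsHermitian by
    simpa using Matrix.isHermitian_conjTranspose_mul_self M).eigenvalues i)

/-!
Write `A = U_A Σ_A V_Aᵀ` and `B = U_B Σ_B V_Bᵀ` with `U`, `V` orthogonal and the singular values
on the diagonals in the given order. Then `tr(AB) = Σ_{i,j} σ_{A,i} σ_{B,j} X_{ij} Y_{ij}` with
`X = V_Aᵀ U_B` and `Y = U_Aᵀ V_B` orthogonal. Since `2 X_{ij} Y_{ij} ≤ X_{ij}² + Y_{ij}²` and the
entrywise squares of an orthogonal matrix form a doubly stochastic matrix, it suffices to bound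
`Σ_{i,j} σ_{A,i} σ_{B,j} P_{ij}` for doubly stochastic `P`. By Birkhoff's theorem this is a convex
combination of the sums `Σ_i σ_{A,i} σ_{B,π i}`, each at most `Σ_i σ_{A,i} σ_{B,i}` by the
rearrangement inequality.
-/

theorem singularValues_nonneg {m n : Type*} [Fintype m] [Fintype n] [DecidableEq n]
    (M : Matrix m n ℝ) (i : n) : 0 ≤ singularValues M i :=
  Real.sqrt_nonneg _

namespace Matrix

variable {n : Type*} [Fintype n] [DecidableEq n]

theorem dotProduct_mulVec_le_of_mem_doublyStochastic {R : Type*} [Field R] [LinearOrder R]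
    [IsStrictOrderedRing R] {f g : n → R} (hfg : Monovary f g) {M : Matrix n n R}
    (hM : M ∈ doublyStochastic R n) : f ⬝ᵥ M *ᵥ g ≤ f ⬝ᵥ g := by
  obtain ⟨w, hw0, hw1, rfl⟩ := exists_eq_sum_perm_of_mem_doublyStochastic hM
  calc f ⬝ᵥ (∑ σ, w σ • σ.permMatrix R) *ᵥ g
      = ∑ σ, w σ * ∑ i, f i * g (σ i) := by
        simp_rw [sum_mulVec, dotProduct_sum, smul_mulVec, dotProduct_smul, permMatrix_mulVec]
        rfl
    _ ≤ ∑ σ, w σ * ∑ i, f i * g i := Finset.sum_le_sum fun σ _ =>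
        mul_le_mul_of_nonneg_left hfg.sum_mul_comp_perm_le_sum_mul (hw0 σ)
    _ = f ⬝ᵥ g := by rw [← Finset.sum_mul, hw1, one_mul, dotProduct]

theorem hadamard_self_mem_doublyStochastic {O : Matrix n n ℝ} (hO : O ∈ orthogonalGroup n ℝ) :
    O ⊙ O ∈ doublyStochastic ℝ n := by
  refine mem_doublyStochastic_iff_sum.2
    ⟨fun i j => mul_self_nonneg (O i j), fun i => ?_, fun j => ?_⟩
  · simpa [mul_apply] using congr_fun₂ ((mem_orthogonalGroup_iff n ℝ).1 hO) i i
  · simpa [mul_apply] using congr_fun₂ ((mem_orthogonalGroup_iff' n ℝ).1 hO) j j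

theorem dotProduct_hadamard_mulVec_le_of_mem_orthogonalGroup {f g : n → ℝ} (hf : 0 ≤ f)
    (hg : 0 ≤ g) (hfg : Monovary f g) {O₁ O₂ : Matrix n n ℝ} (h₁ : O₁ ∈ orthogonalGroup n ℝ)
    (h₂ : O₂ ∈ orthogonalGroup n ℝ) : f ⬝ᵥ (O₁ ⊙ O₂) *ᵥ g ≤ f ⬝ᵥ g := by
  have amgm : 2 * (f ⬝ᵥ (O₁ ⊙ O₂) *ᵥ g) ≤ f ⬝ᵥ (O₁ ⊙ O₁) *ᵥ g + f ⬝ᵥ (O₂ ⊙ O₂) *ᵥ g := by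
    simp only [dotProduct, mulVec, hadamard_apply, Finset.mul_sum, ← Finset.sum_add_distrib]
    gcongr with i _ j _
    nlinarith [mul_nonneg (hf i) (hg j), sq_nonneg (O₁ i j - O₂ i j)]
  have h₁₁ := dotProduct_mulVec_le_of_mem_doublyStochastic hfg
    (hadamard_self_mem_doublyStochastic h₁)
  have h₂₂ := dotProduct_mulVec_le_of_mem_doublyStochastic hfg
    (hadamard_self_mem_doublyStochastic h₂)
  linarith

theorem trace_diagonal_mul_mul_diagonal_mul {R : Type*} [CommRing R] (α β : n → R)
    (X Y : Matrix n n R) :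
    (diagonal α * X * diagonal β * Y).trace = α ⬝ᵥ (X ⊙ Yᵀ) *ᵥ β := by
  simp only [trace, diag, mul_apply (M := diagonal α * X * diagonal β), mul_diagonal,
    diagonal_mul, dotProduct, mulVec, hadamard, of_apply, transpose_apply, Finset.mul_sum]
  exact Finset.sum_congr rfl fun i _ => Finset.sum_congr rfl fun j _ => by ring

theorem transpose_mem_orthogonalGroup {R : Type*} [CommRing R] {O : Matrix n n R}
    (hO : O ∈ orthogonalGroup n R) : Oᵀ ∈ orthogonalGroup n R := by
  rw [mem_orthogonalGroup_iff, transpose_transpose]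
  exact (mem_orthogonalGroup_iff' n R).1 hO

theorem submatrix_id_mem_orthogonalGroup {R : Type*} [CommRing R] {O : Matrix n n R}
    (hO : O ∈ orthogonalGroup n R) (e : n ≃ n) : O.submatrix id e ∈ orthogonalGroup n R := by
  rw [mem_orthogonalGroup_iff, transpose_submatrix, submatrix_mul_equiv, submatrix_id_id]
  exact (mem_orthogonalGroup_iff n R).1 hO

theorem exists_orthogonal_mul_diagonal_of_transpose_mul_self (W : Matrix n n ℝ) (σ : n → ℝ)
    (hW : Wᵀ * W = diagonal (σ ^ 2)) : ∃ U ∈ orthogonalGroup n ℝ, W = U * diagonal σ := by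
  set u : n → EuclideanSpace ℝ n := fun j => (σ j)⁻¹ • WithLp.toLp 2 (Wᵀ j)
  have hu : Orthonormal ℝ ({j | σ j ≠ 0}.domRestrict u) := by
    rw [orthonormal_iff_ite]
    rintro ⟨i, hi : σ i ≠ 0⟩ ⟨j, -⟩
    have hWij := congr_fun₂ hW i j
    simp only [mul_apply, transpose_apply, diagonal_apply] at hWij
    simp only [Set.domRestrict_apply, u, inner_smul_left, inner_smul_right, PiLp.inner_apply,
      Subtype.mk.injEq, transpose_apply, Real.inner_apply, conj_trivial, hWij, Pi.pow_apply]
    split_ifs with h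
    · subst h
      field_simp
    · simp
  -- the columns of `U` are `b j`, equal to `W_j / σ j` when `σ j ≠ 0`; the other `W_j` vanish
  obtain ⟨b, hb⟩ := hu.exists_orthonormalBasis_extension_of_card_eq finrank_euclideanSpace
  refine ⟨(EuclideanSpace.basisFun n ℝ).toBasis.toMatrix b,
    (EuclideanSpace.basisFun n ℝ).toMatrix_orthonormalBasis_mem_unitary b, ?_⟩
  ext k j
  rw [mul_diagonal]
  change W k j = b j k * σ j
  by_cases hσ : σ j = 0
  · have hWj : Wᵀ j ⬝ᵥ Wᵀ j = 0 := by
      have hWjj := congr_fun₂ hW j j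
      rwa [mul_apply', diagonal_apply_eq, Pi.pow_apply, hσ, zero_pow two_ne_zero] at hWjj
    simpa [hσ] using congr_fun (dotProduct_self_eq_zero.1 hWj) k
  · rw [hb j hσ]
    simp only [u, PiLp.smul_apply, transpose_apply, smul_eq_mul]
    field_simp

theorem transpose_mul_self_mul_eigenvectorUnitary (A : Matrix n n ℝ) (hH : (Aᵀ * A).IsHermitian) :
    (A * (hH.eigenvectorUnitary : Matrix n n ℝ))ᵀ * (A * (hH.eigenvectorUnitary : Matrix n n ℝ)) =
      diagonal (singularValues A ^ 2) := by
  have hev : hH.eigenvalues = singularValues A ^ 2 := funext fun j =>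
    (Real.sq_sqrt (eigenvalues_conjTranspose_mul_self_nonneg A j)).symm
  have h := hH.conjStarAlgAut_star_eigenvectorUnitary
  rw [Unitary.conjStarAlgAut_star_apply, RCLike.ofReal_real_eq_id, Function.id_comp] at h
  rw [← hev, ← h, transpose_mul, star_eq_conjTranspose, conjTranspose_eq_transpose_of_trivial]
  simp only [Matrix.mul_assoc]

theorem exists_orthogonal_mul_diagonal_singularValues_comp_mul (A : Matrix n n ℝ) (e : n ≃ n) :
    ∃ U ∈ orthogonalGroup n ℝ, ∃ V ∈ orthogonalGroup n ℝ,
      A = U * diagonal (singularValues A ∘ e) * Vᵀ := by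
  have hH : (Aᵀ * A).IsHermitian := by simpa using isHermitian_conjTranspose_mul_self A
  set V := (hH.eigenvectorUnitary : Matrix n n ℝ).submatrix id e
  have hV : V ∈ orthogonalGroup n ℝ := submatrix_id_mem_orthogonalGroup hH.eigenvectorUnitary.2 e
  have hAV : (A * V)ᵀ * (A * V) = diagonal ((singularValues A ∘ e) ^ 2) := by
    rw [show A * V = (A * hH.eigenvectorUnitary).submatrix id e by
        rw [submatrix_mul _ _ _ id _ Function.bijective_id, submatrix_id_id],
      transpose_submatrix, ← submatrix_mul _ _ _ id _ Function.bijective_id,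
      transpose_mul_self_mul_eigenvectorUnitary A hH, submatrix_diagonal_equiv]
    rfl
  obtain ⟨U, hU, hAVU⟩ := exists_orthogonal_mul_diagonal_of_transpose_mul_self _ _ hAV
  refine ⟨U, hU, V, hV, ?_⟩
  rw [← hAVU, Matrix.mul_assoc, (mem_orthogonalGroup_iff n ℝ).1 hV, Matrix.mul_one]

end Matrix

/-- **Von Neumann's trace inequality** (real square case).  If `σA` and `σB` list the
singular values of `A` and `B` in nonincreasing order, then
`tr(A B) ≤ Σ_i σA i * σB i`. -/
theorem vonNeumann_trace_inequality
    {d : ℕ} (A B : Matrix (Fin d) (Fin d) ℝ)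
    (σA σB : Fin d → ℝ)
    (hσA : Antitone σA) (hσB : Antitone σB)
    (eA : Fin d ≃ Fin d) (heA : ∀ i, σA i = singularValues A (eA i))
    (eB : Fin d ≃ Fin d) (heB : ∀ i, σB i = singularValues B (eB i)) :
    (A * B).trace ≤ ∑ i, σA i * σB i := by
  obtain ⟨UA, hUA, VA, hVA, hA⟩ := exists_orthogonal_mul_diagonal_singularValues_comp_mul A eA
  obtain ⟨UB, hUB, VB, hVB, hB⟩ := exists_orthogonal_mul_diagonal_singularValues_comp_mul B eB
  rw [show singularValues A ∘ eA = σA from funext fun i => (heA i).symm] at hA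
  rw [show singularValues B ∘ eB = σB from funext fun i => (heB i).symm] at hB
  have htrace : (A * B).trace = σA ⬝ᵥ ((VAᵀ * UB) ⊙ (VBᵀ * UA)ᵀ) *ᵥ σB := by
    rw [← trace_diagonal_mul_mul_diagonal_mul, hA, hB]
    simp only [Matrix.mul_assoc]
    rw [trace_mul_comm UA]
    simp only [Matrix.mul_assoc]
  have hA0 : 0 ≤ σA := fun i => heA i ▸ singularValues_nonneg A (eA i)
  have hB0 : 0 ≤ σB := fun i => heB i ▸ singularValues_nonneg B (eB i)
  rw [htrace, transpose_mul, transpose_transpose]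
  exact dotProduct_hadamard_mulVec_le_of_mem_orthogonalGroup hA0 hB0
    (hσA.monovary hσB) (mul_mem (transpose_mem_orthogonalGroup hVA) hUB)
    (mul_mem (transpose_mem_orthogonalGroup hUA) hVB)
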